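/- Let G be a group, F ⊴ G a normal subgroup of finite index [G:F] < ∞, and K ≤ F a subgroup. If the quotient F / Core_∅^F(K) is nilpotent, then G / Core_∅^G(K) is virtually nilpotent (i.e., has a nilpotent subgroup of finite index). -/

import Mathlib

open Filter MeasureTheory
open scoped ENNReal Topology

noncomputable section

namespace Paper

variable {G : Type*} [Group G]

/-- Conjugation on subgroups: `conjSubgroup g K = g K g⁻¹`. -/
def conjSubgroup (g : G) (K : Subgroup G) : Subgroup G :=
  K.map (MulAut.conj g).toMonoidHom

lemma mem_conjSubgroup {g x : G} {K : Subgroup G} :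
    x ∈ conjSubgroup g K ↔ g⁻¹ * x * g ∈ K := by
  constructor
  · rintro ⟨y, hy, rfl⟩
    simpa [MulAut.conj_apply, mul_assoc] using hy
  · intro h
    exact ⟨g⁻¹ * x * g, h, by simp [MulAut.conj_apply]; group⟩

lemma conjSubgroup_conjSubgroup (a b : G) (K : Subgroup G) :
    conjSubgroup a (conjSubgroup b K) = conjSubgroup (a * b) K := by
  ext x
  simp only [mem_conjSubgroup]
  have e : b⁻¹ * (a⁻¹ * x * a) * b = (a * b)⁻¹ * x * (a * b) := by group
  rw [e]

lemma conjSubgroup_eq_of_mem_normalizer {n : G} {K : Subgroup G}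
    (hn : n ∈ (Subgroup.normalizer (K : Set G))) : conjSubgroup n K = K := by
  ext x
  rw [mem_conjSubgroup]
  exact (Subgroup.mem_normalizer_iff''.mp hn x).symm

/-- `Θ = Θ_G(K)`: the set of right cosets of the normalizer of `K` in `G`. -/
abbrev NormCoset (K : Subgroup G) := Quotient (QuotientGroup.rightRel (Subgroup.normalizer (K : Set G)))

/-- The conjugate `K^θ = g⁻¹ K g` for `θ = N_G(K)·g ∈ Θ` (it does not depend on the
chosen representative of the coset). -/
def conjCoset (K : Subgroup G) (θ : NormCoset K) : Subgroup G :=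
  conjSubgroup θ.out⁻¹ K

lemma conjSubgroup_inv_eq_of_rel {a b : G} {K : Subgroup G}
    (h : QuotientGroup.rightRel (Subgroup.normalizer (K : Set G)) a b) :
    conjSubgroup a⁻¹ K = conjSubgroup b⁻¹ K := by
  rw [QuotientGroup.rightRel_apply] at h
  have e : conjSubgroup a⁻¹ K = conjSubgroup (b⁻¹ * (b * a⁻¹)) K := by
    congr 1; group
  rw [e, ← conjSubgroup_conjSubgroup, conjSubgroup_eq_of_mem_normalizer h]

lemma conjCoset_mk (K : Subgroup G) (a : G) :
    conjCoset K (Quotient.mk (QuotientGroup.rightRel (Subgroup.normalizer (K : Set G))) a) =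
      conjSubgroup a⁻¹ K := by
  apply conjSubgroup_inv_eq_of_rel
  exact Quotient.mk_out (s := QuotientGroup.rightRel (Subgroup.normalizer (K : Set G))) a

/-- The right action of `G` on `Θ`. -/
def shift (K : Subgroup G) (θ : NormCoset K) (g : G) : NormCoset K :=
  Quotient.mk (QuotientGroup.rightRel (Subgroup.normalizer (K : Set G))) (θ.out * g)

lemma rel_mul {K : Subgroup G} {a b : G} (h : QuotientGroup.rightRel (Subgroup.normalizer (K : Set G)) a b)
    (g : G) : QuotientGroup.rightRel (Subgroup.normalizer (K : Set G)) (a * g) (b * g) := by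
  rw [QuotientGroup.rightRel_apply] at h ⊢
  have e : b * g * (a * g)⁻¹ = b * a⁻¹ := by group
  rw [e]; exact h

lemma shift_mk (K : Subgroup G) (a g : G) :
    shift K (Quotient.mk (QuotientGroup.rightRel (Subgroup.normalizer (K : Set G))) a) g =
      Quotient.mk (QuotientGroup.rightRel (Subgroup.normalizer (K : Set G))) (a * g) := by
  apply Quotient.sound
  exact rel_mul (Quotient.mk_out (s := QuotientGroup.rightRel (Subgroup.normalizer (K : Set G))) a) g

lemma shift_shift (K : Subgroup G) (θ : NormCoset K) (g h : G) :
    shift K (shift K θ g) h = shift K θ (g * h) := by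
  induction θ using Quotient.inductionOn with
  | h a => rw [shift_mk, shift_mk, shift_mk, mul_assoc]

lemma shift_one (K : Subgroup G) (θ : NormCoset K) : shift K θ 1 = θ := by
  induction θ using Quotient.inductionOn with
  | h a => rw [shift_mk, mul_one]

lemma shift_injective (K : Subgroup G) (g : G) :
    Function.Injective (fun θ : NormCoset K => shift K θ g) := by
  intro θ₁ θ₂ h
  have h2 := congrArg (fun θ : NormCoset K => shift K θ g⁻¹) h
  simpa [shift_shift, shift_one] using h2

lemma conjCoset_shift (K : Subgroup G) (θ : NormCoset K) (g : G) :
    conjCoset K (shift K θ g) = conjSubgroup g⁻¹ (conjCoset K θ) := by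
  induction θ using Quotient.inductionOn with
  | h a =>
    rw [shift_mk, conjCoset_mk, conjCoset_mk, conjSubgroup_conjSubgroup]
    congr 1
    group

/-- `‖g‖_K = #{θ ∈ Θ : g ∉ K^θ} ∈ ℕ ∪ {∞}`. -/
def normOf (K : Subgroup G) (g : G) : ℕ∞ :=
  {θ : NormCoset K | g ∉ conjCoset K θ}.encard

/-- `Core_∅(K) = {g : ‖g‖_K < ∞}`, as a subgroup of `G`. -/
def emptyCore (K : Subgroup G) : Subgroup G where
  carrier := {g | normOf K g < ⊤}
  one_mem' := by
    have h : {θ : NormCoset K | (1 : G) ∉ conjCoset K θ} = ∅ := by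
      ext θ; simp [Subgroup.one_mem]
    simp [normOf, Set.mem_setOf_eq, h]
  mul_mem' := by
    intro a b ha hb
    simp only [Set.mem_setOf_eq, normOf] at ha hb ⊢
    have hsub : {θ : NormCoset K | a * b ∉ conjCoset K θ} ⊆
        {θ : NormCoset K | a ∉ conjCoset K θ} ∪ {θ : NormCoset K | b ∉ conjCoset K θ} := by
      intro θ hθ
      by_contra hc
      simp only [Set.mem_union, Set.mem_setOf_eq, not_or, not_not] at hc
      exact hθ (mul_mem hc.1 hc.2)
    calc {θ : NormCoset K | a * b ∉ conjCoset K θ}.encard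
        ≤ ({θ : NormCoset K | a ∉ conjCoset K θ} ∪
            {θ : NormCoset K | b ∉ conjCoset K θ}).encard := Set.encard_mono hsub
      _ ≤ _ + _ := Set.encard_union_le _ _
      _ < ⊤ := WithTop.add_lt_top.mpr ⟨ha, hb⟩
  inv_mem' := by
    intro a ha
    have h : {θ : NormCoset K | a⁻¹ ∉ conjCoset K θ} =
        {θ : NormCoset K | a ∉ conjCoset K θ} := by
      ext θ; simp
    simpa only [Set.mem_setOf_eq, normOf, h] using ha

lemma mem_emptyCore {K : Subgroup G} {g : G} :
    g ∈ emptyCore K ↔ normOf K g < ⊤ := Iff.rfl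

/-- `Core_∅(K)` is a normal subgroup of `G`. -/
instance emptyCore_normal (K : Subgroup G) : (emptyCore K).Normal := by
  constructor
  intro n hn g
  rw [mem_emptyCore] at hn ⊢
  rw [normOf, Set.encard_lt_top_iff] at hn ⊢
  have hset : {θ : NormCoset K | g * n * g⁻¹ ∉ conjCoset K θ} =
      (fun θ : NormCoset K => shift K θ g) ⁻¹' {θ : NormCoset K | n ∉ conjCoset K θ} := by
    ext θ
    simp only [Set.mem_setOf_eq, Set.mem_preimage, conjCoset_shift, mem_conjSubgroup]
    have e : g⁻¹⁻¹ * n * g⁻¹ = g * n * g⁻¹ := by group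
    rw [e]
  rw [hset]
  exact Set.Finite.preimage (Set.injOn_of_injective (shift_injective K g)) hn

/-! Every `θ ∈ Θ_G(K)` has the form `(N_G(K) f) t` with `f ∈ F` and `t` one of the finitely many
representatives of the right cosets of `F`, and `g ∉ K^θ` iff `t g t⁻¹ ∉ K^(N_F(K) f)`. Hence a
normal subgroup of `G` inside `F ∩ Core_∅^F(K)` lies in `Core_∅^G(K)`. When `F / Core_∅^F(K)` is
nilpotent, some term `γₙ(F)` of the lower central series is such a subgroup, so the image of `F` in
`G / Core_∅^G(K)`, a subgroup of finite index, has trivial `γₙ`. -/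

lemma mem_conjCoset_shift_iff (K : Subgroup G) (θ : NormCoset K) (g t : G) :
    g ∈ conjCoset K (shift K θ t) ↔ t * g * t⁻¹ ∈ conjCoset K θ := by
  rw [conjCoset_shift, mem_conjSubgroup, inv_inv]

section LiftCoset

variable {F K : Subgroup G}

lemma coe_mem_normalizer_of_mem_normalizer_subgroupOf (hKF : K ≤ F) {f : F}
    (hf : f ∈ Subgroup.normalizer (K.subgroupOf F : Set F)) :
    (f : G) ∈ Subgroup.normalizer (K : Set G) := by
  have h := Subgroup.le_normalizer_map F.subtype ⟨f, hf, rfl⟩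
  rwa [Subgroup.subgroupOf_map_subtype, inf_eq_left.mpr hKF] at h

def liftCoset (hKF : K ≤ F) : NormCoset (K.subgroupOf F) → NormCoset K :=
  Quotient.map' (↑) fun a b hab => by
    rw [QuotientGroup.rightRel_apply] at hab ⊢
    simpa using coe_mem_normalizer_of_mem_normalizer_subgroupOf hKF hab

lemma liftCoset_mk (hKF : K ≤ F) (f : F) :
    liftCoset hKF (Quotient.mk _ f) = Quotient.mk _ (f : G) :=
  rfl

lemma coe_mem_conjCoset_liftCoset_iff (hKF : K ≤ F) (η : NormCoset (K.subgroupOf F)) (x : F) :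
    (x : G) ∈ conjCoset K (liftCoset hKF η) ↔ x ∈ conjCoset (K.subgroupOf F) η := by
  induction η using Quotient.inductionOn with
  | h f => simp [liftCoset_mk, conjCoset_mk, mem_conjSubgroup, Subgroup.mem_subgroupOf]

lemma exists_eq_shift_liftCoset (hKF : K ≤ F) (θ : NormCoset K) :
    ∃ (q : Quotient (QuotientGroup.rightRel F)) (η : NormCoset (K.subgroupOf F)),
      θ = shift K (liftCoset hKF η) q.out := by
  induction θ using Quotient.inductionOn with
  | h a =>
    set q : Quotient (QuotientGroup.rightRel F) := Quotient.mk _ a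
    have hq : a * q.out⁻¹ ∈ F :=
      QuotientGroup.rightRel_apply.mp (Quotient.mk_out (s := QuotientGroup.rightRel F) a)
    refine ⟨q, Quotient.mk _ ⟨a * q.out⁻¹, hq⟩, ?_⟩
    rw [liftCoset_mk, shift_mk, Subgroup.coe_mk, inv_mul_cancel_right]

end LiftCoset

theorem le_emptyCore_of_subgroupOf_le {F K N : Subgroup G} [F.FiniteIndex] [N.Normal]
    (hKF : K ≤ F) (hNF : N ≤ F) (hN : N.subgroupOf F ≤ emptyCore (K.subgroupOf F)) :
    N ≤ emptyCore K := by
  intro g hg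
  have hconj (t : G) : t * g * t⁻¹ ∈ N := Subgroup.Normal.conj_mem ‹_› g hg t
  have hfin (t : G) :
      {η | (⟨t * g * t⁻¹, hNF (hconj t)⟩ : F) ∉ conjCoset (K.subgroupOf F) η}.Finite :=
    Set.encard_lt_top_iff.mp (hN (Subgroup.mem_subgroupOf.mpr (hconj t)))
  have : Finite (Quotient (QuotientGroup.rightRel F)) :=
    Finite.of_equiv _ (QuotientGroup.quotientRightRelEquivQuotientLeftRel F).symm
  rw [mem_emptyCore, normOf, Set.encard_lt_top_iff]
  refine (Set.finite_iUnion fun q : Quotient (QuotientGroup.rightRel F) =>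
    (hfin q.out).image fun η => shift K (liftCoset hKF η) q.out).subset ?_
  intro θ hθ
  obtain ⟨q, η, rfl⟩ := exists_eq_shift_liftCoset hKF θ
  refine Set.mem_iUnion.mpr ⟨q, η, ?_, rfl⟩
  exact fun h =>
    hθ ((mem_conjCoset_shift_iff ..).mpr ((coe_mem_conjCoset_liftCoset_iff hKF η _).mpr h))

theorem exists_lowerCentralSeries_le_of_isNilpotent_quotient (N : Subgroup G) [N.Normal]
    (h : Group.IsNilpotent (G ⧸ N)) : ∃ n, Subgroup.lowerCentralSeries ⊤ n ≤ N := by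
  obtain ⟨n, hn⟩ := Subgroup.nilpotent_iff_lowerCentralSeries.mp h
  refine ⟨n, ?_⟩
  rw [← QuotientGroup.ker_mk' N, ← Subgroup.map_eq_bot_iff, Subgroup.map_lowerCentralSeries,
    Subgroup.map_top_of_surjective _ (QuotientGroup.mk'_surjective N), hn]

/-- **Lemma 2.5.** Let `F ⊴ G` be a normal subgroup of finite index and `K ≤ F`.
If `F / Core_∅^F(K)` is nilpotent, then `G / Core_∅^G(K)` is virtually nilpotent. -/
theorem virtually_nilpotent_of_nilpotent_emptyCore {G : Type*} [Group G]
    (F : Subgroup G) [F.Normal] [F.FiniteIndex]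
    (K : Subgroup G) (hKF : K ≤ F)
    (hnilp : Group.IsNilpotent (↥F ⧸ emptyCore (K.subgroupOf F))) :
    ∃ H : Subgroup (G ⧸ emptyCore K), H.FiniteIndex ∧ Group.IsNilpotent ↥H := by
  obtain ⟨n, hn⟩ := exists_lowerCentralSeries_le_of_isNilpotent_quotient _ hnilp
  have hFn : F.lowerCentralSeries n ≤ emptyCore K := by
    refine le_emptyCore_of_subgroupOf_le hKF (F.lowerCentralSeries_le_self n) ?_
    rwa [← Subgroup.top_subtype_lowerCentralSeries, Subgroup.subgroupOf,
      Subgroup.comap_map_eq_self_of_injective F.subtype_injective]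
  let π := QuotientGroup.mk' (emptyCore K)
  refine ⟨F.map π, ⟨ne_zero_of_dvd_ne_zero Subgroup.FiniteIndex.index_ne_zero
    (Subgroup.index_map_dvd _ (QuotientGroup.mk'_surjective _))⟩, ?_⟩
  refine (Subgroup.isNilpotent_iff_lowerCentralSeries _).mpr ⟨n, ?_⟩
  rwa [← Subgroup.map_lowerCentralSeries, Subgroup.map_eq_bot_iff, QuotientGroup.ker_mk']

end Paper
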